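/- arXiv:0902.4185 — 4 statements merged into one kernel-verified Lean document; each statement's English description precedes it below -/
import Mathlib

section
/- (Deterministic core of Theorem 6.1.) Let a CSP instance with N = |V| variables be given in which every constraint is locked and every variable has degree exactly L. Suppose the factor graph is an (ε, L/2)-expander in the sense that for every nonempty set S ⊆ V of variables with |S| ≤ ε·N, the number of constraints whose scope meets S is strictly greater than (L/2)·|S|. Then any two assignments σ, τ : V → Bool that both satisfy every constraint are either equal or differ on more than ε·N variables; in particular there is no satisfying assignment at positive Hamming distance at most ε·N from a given satisfying assignment. -/
/-- A constraint satisfaction problem instance. -/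
structure CSP (V C : Type*) where
  arity : C → ℕ
  scope : (c : C) → Fin (arity c) → V
  pred : (c : C) → (Fin (arity c) → Bool) → Prop

/-- An assignment satisfies the instance if it satisfies every constraint. -/
def CSP.Satisfies {V C : Type*} (P : CSP V C) (σ : V → Bool) : Prop :=
  ∀ c, P.pred c (fun i => σ (P.scope c i))

/-- A constraint is locked if no two satisfying local assignments differ in
exactly one coordinate. -/
def CSP.LockedAt {V C : Type*} (P : CSP V C) (c : C) : Prop :=
  ¬ ∃ x y : Fin (P.arity c) → Bool, P.pred c x ∧ P.pred c y ∧
      (Finset.univ.filter fun i => x i ≠ y i).card = 1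

/-- The degree of a variable `v`: the number of pairs `(c, i)` with
`scope c i = v`. -/
def CSP.degree {V C : Type*} [Fintype C] [DecidableEq V] (P : CSP V C) (v : V) : ℕ :=
  (Finset.univ.filter fun p : (Σ c : C, Fin (P.arity c)) => P.scope p.1 p.2 = v).card

/-!
If two satisfying assignments differ on a nonempty set `D` of variables, then every constraint
whose scope meets `D` sees at least two of its coordinates flipped, since a locked constraint
admits no pair of solutions at Hamming distance one. Counting the incidences between `D` and
constraints, each variable contributing `L` of them, shows that at most `(L/2)·|D|` constraints
meet `D`, so `D` cannot be small enough for the expansion hypothesis to apply.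
-/

open Finset

namespace CSP

variable {V C : Type*} {P : CSP V C}

theorem LockedAt.two_le_card_ne {c : C} (hc : P.LockedAt c) {x y : Fin (P.arity c) → Bool}
    (hx : P.pred c x) (hy : P.pred c y) (hxy : ∃ i, x i ≠ y i) :
    2 ≤ #(univ.filter fun i => x i ≠ y i) := by
  obtain ⟨i, hi⟩ := hxy
  have hpos : 0 < #(univ.filter fun i => x i ≠ y i) := card_pos.mpr ⟨i, by simpa using hi⟩
  have hne : #(univ.filter fun i => x i ≠ y i) ≠ 1 := fun h => hc ⟨x, y, hx, hy, h⟩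
  omega

variable [Fintype C] [DecidableEq V]

variable (P) in
theorem sum_card_scope_mem_eq_sum_degree (S : Finset V) :
    ∑ c, #(univ.filter fun i => P.scope c i ∈ S) = ∑ v ∈ S, P.degree v := by
  let incidences : Finset (Σ c : C, Fin (P.arity c)) := univ.filter fun p => P.scope p.1 p.2 ∈ S
  have hsigma : incidences = univ.sigma fun c => univ.filter fun i => P.scope c i ∈ S := by
    ext ⟨c, i⟩
    simp [incidences]
  have hfiber : ∀ v ∈ S,
      #(incidences.filter fun p => P.scope p.1 p.2 = v) = P.degree v := by
    intro v hv
    unfold degree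
    congr 1
    ext p
    simp only [incidences, mem_filter, mem_univ, true_and, and_iff_right_iff_imp]
    exact fun h => h ▸ hv
  rw [← card_sigma, ← hsigma,
    card_eq_sum_card_fiberwise (s := incidences) (t := S) fun p hp => (mem_filter.mp hp).2]
  exact sum_congr rfl hfiber

theorem two_mul_card_meeting_le_sum_degree {S : Finset V}
    (hmeet : ∀ c, (∃ i, P.scope c i ∈ S) → 2 ≤ #(univ.filter fun i => P.scope c i ∈ S)) :
    2 * #(univ.filter fun c : C => ∃ i, P.scope c i ∈ S) ≤ ∑ v ∈ S, P.degree v := by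
  rw [← P.sum_card_scope_mem_eq_sum_degree S, mul_comm, ← smul_eq_mul, ← sum_const]
  calc ∑ _ ∈ univ.filter fun c : C => ∃ i, P.scope c i ∈ S, 2
      ≤ ∑ c ∈ univ.filter fun c : C => ∃ i, P.scope c i ∈ S,
          #(univ.filter fun i => P.scope c i ∈ S) :=
        sum_le_sum fun c hc => hmeet c (mem_filter.mp hc).2
    _ ≤ ∑ c, #(univ.filter fun i => P.scope c i ∈ S) :=
        sum_le_sum_of_subset (filter_subset _ _)

end CSP

open CSP

/-- Deterministic core of Theorem 6.1: in a locked `L`-regular instance whose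
factor graph is an `(ε, L/2)`-expander, any two satisfying assignments are
either equal or differ on more than `ε·N` variables. -/
theorem locked_expander_solutions_far_apart
    {V C : Type*} [Fintype V] [Fintype C] [DecidableEq V]
    (P : CSP V C) (L : ℕ) (ε : ℝ)
    (hlocked : ∀ c, P.LockedAt c)
    (hdeg : ∀ v : V, P.degree v = L)
    (hexpander : ∀ S : Finset V, S.Nonempty → (S.card : ℝ) ≤ ε * Fintype.card V →
      (L : ℝ) / 2 * S.card <
        ((Finset.univ.filter fun c : C => ∃ i, P.scope c i ∈ S).card : ℝ))
    (σ τ : V → Bool) (hσ : P.Satisfies σ) (hτ : P.Satisfies τ) :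
    σ = τ ∨
      ε * Fintype.card V < ((Finset.univ.filter fun v : V => σ v ≠ τ v).card : ℝ) := by
  set D := univ.filter fun v : V => σ v ≠ τ v
  rcases D.eq_empty_or_nonempty with hD | hD
  · left
    funext v
    by_contra hv
    exact (eq_empty_iff_forall_notMem.mp hD) v (by simpa [D] using hv)
  right
  by_contra! hsmall
  have hmeet : ∀ c, (∃ i, P.scope c i ∈ D) → 2 ≤ #(univ.filter fun i => P.scope c i ∈ D) := by
    rintro c ⟨i, hi⟩
    simpa [D] using (hlocked c).two_le_card_ne (hσ c) (hτ c) ⟨i, by simpa [D] using hi⟩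
  have hcount := two_mul_card_meeting_le_sum_degree hmeet
  simp only [hdeg, sum_const, smul_eq_mul] at hcount
  have hcount' : (2 : ℝ) * #(univ.filter fun c : C => ∃ i, P.scope c i ∈ D) ≤ #D * L := by
    exact_mod_cast hcount
  linarith [hexpander D hD hsmall]
end

section
/- (Quantitative form of Proposition 4.1.) Let Ω be a finite nonempty type, μ a probability measure on Ω, f : Ω → ℝ nonnegative with 𝔼_μ[f] > 0, and ν the planted measure ν(A) = 𝔼_μ[f · 1_A] / 𝔼_μ[f]. Let N > 0 and real numbers c, ε, δ, m be given, and let A ⊆ Ω be a set such that: μ(A) ≤ exp(−c·N) (the property Ω \ A is thermodynamic for μ), f(ω) ≤ exp((m + ε)·N) for all ω ∈ A, and 𝔼_μ[f] ≥ exp((m − δ)·N) (annealed entropy close to m). Then ν(A) ≤ exp((ε + δ − c)·N); in particular if c > ε + δ the set A has exponentially small probability also under the planted measure. -/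
/-!
Tilting by `f` multiplies the `μ`-mass of `A` by at most `sup_A f / 𝔼_μ[f]`; with
`sup_A f ≤ exp((m + ε)N)`, `μ(A) ≤ exp(-cN)` and `𝔼_μ[f] ≥ exp((m - δ)N)` the exponents
combine to `(ε + δ - c)N`.
-/

open Finset

theorem Finset.sum_mul_le_mul_sum_of_le {ι : Type*} {s : Finset ι} {μ f : ι → ℝ} {M : ℝ}
    (hμ : ∀ i ∈ s, 0 ≤ μ i) (hf : ∀ i ∈ s, f i ≤ M) :
    ∑ i ∈ s, μ i * f i ≤ M * ∑ i ∈ s, μ i := by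
  rw [mul_sum]
  exact sum_le_sum fun i hi => by
    rw [mul_comm M]
    exact mul_le_mul_of_nonneg_left (hf i hi) (hμ i hi)

theorem Finset.sum_mul_div_le_of_le {ι : Type*} {s : Finset ι} {μ f : ι → ℝ} {M p L Z : ℝ}
    (hμ : ∀ i ∈ s, 0 ≤ μ i) (hf : ∀ i ∈ s, f i ≤ M) (hM : 0 ≤ M)
    (hs : ∑ i ∈ s, μ i ≤ p) (hL : 0 < L) (hLZ : L ≤ Z) :
    (∑ i ∈ s, μ i * f i) / Z ≤ M * p / L := by
  have hp : 0 ≤ p := (sum_nonneg hμ).trans hs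
  refine div_le_div₀ (mul_nonneg hM hp) ?_ hL hLZ
  calc ∑ i ∈ s, μ i * f i ≤ M * ∑ i ∈ s, μ i := sum_mul_le_mul_sum_of_le hμ hf
    _ ≤ M * p := mul_le_mul_of_nonneg_left hs hM

theorem planted_measure_of_rare_set_exponentially_small_general
    {Ω : Type*} [Fintype Ω]
    (μ : Ω → ℝ) (hμ0 : ∀ ω, 0 ≤ μ ω)
    (f : Ω → ℝ)
    (N c ε δ m : ℝ)
    (A : Finset Ω)
    (hA : ∑ ω ∈ A, μ ω ≤ Real.exp (-c * N))
    (hfA : ∀ ω ∈ A, f ω ≤ Real.exp ((m + ε) * N))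
    (hE : Real.exp ((m - δ) * N) ≤ ∑ ω, μ ω * f ω) :
    (∑ ω ∈ A, μ ω * f ω) / (∑ ω, μ ω * f ω) ≤ Real.exp ((ε + δ - c) * N) := by
  have hexp : Real.exp ((m + ε) * N) * Real.exp (-c * N) / Real.exp ((m - δ) * N) =
      Real.exp ((ε + δ - c) * N) := by
    rw [← Real.exp_add, ← Real.exp_sub]
    ring_nf
  rw [← hexp]
  exact sum_mul_div_le_of_le (fun ω _ => hμ0 ω) hfA (Real.exp_nonneg _) hA
    (Real.exp_pos _) hE

/-- Quantitative form of Proposition 4.1: if `μ(A) ≤ exp(−c·N)`,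
`f ≤ exp((m+ε)·N)` on `A`, and `𝔼_μ[f] ≥ exp((m−δ)·N)`, then the planted
measure of `A`, namely `𝔼_μ[f·1_A] / 𝔼_μ[f]`, is at most `exp((ε+δ−c)·N)`. -/
theorem planted_measure_of_rare_set_exponentially_small
    {Ω : Type*} [Fintype Ω] [Nonempty Ω]
    (μ : Ω → ℝ) (hμ0 : ∀ ω, 0 ≤ μ ω) (hμ1 : ∑ ω, μ ω = 1)
    (f : Ω → ℝ) (hf0 : ∀ ω, 0 ≤ f ω) (hfpos : 0 < ∑ ω, μ ω * f ω)
    (N c ε δ m : ℝ) (hN : 0 < N)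
    (A : Finset Ω)
    (hA : ∑ ω ∈ A, μ ω ≤ Real.exp (-c * N))
    (hfA : ∀ ω ∈ A, f ω ≤ Real.exp ((m + ε) * N))
    (hE : Real.exp ((m - δ) * N) ≤ ∑ ω, μ ω * f ω) :
    (∑ ω ∈ A, μ ω * f ω) / (∑ ω, μ ω * f ω) ≤ Real.exp ((ε + δ - c) * N) :=
  planted_measure_of_rare_set_exponentially_small_general μ hμ0 f N c ε δ m A hA hfA hE
end

section
/- (Leaf values uniquely imply all values in locked tree problems.) Let a CSP instance be given in which every constraint is locked and every scope map var_c is injective, and suppose the factor graph — the bipartite simple graph on V ⊕ C with an edge between v and c exactly when v lies in the scope of c — is acyclic. If σ and τ are two assignments satisfying every constraint and σ(v) = τ(v) for every variable v of degree at most 1 (the leaves), then σ = τ. -/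
/-- The factor graph of a CSP instance: the bipartite simple graph on `V ⊕ C`
with an edge between a variable and a constraint iff the variable lies in
the scope of the constraint. -/
def CSP.factorGraph {V C : Type*} (P : CSP V C) : SimpleGraph (V ⊕ C) where
  Adj x y :=
    (∃ v c, x = Sum.inl v ∧ y = Sum.inr c ∧ ∃ i, P.scope c i = v) ∨
    (∃ v c, x = Sum.inr c ∧ y = Sum.inl v ∧ ∃ i, P.scope c i = v)
  symm := by
    constructor
    rintro x y (⟨v, c, rfl, rfl, h⟩ | ⟨v, c, rfl, rfl, h⟩)
    · exact Or.inr ⟨v, c, rfl, rfl, h⟩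
    · exact Or.inl ⟨v, c, rfl, rfl, h⟩
  loopless := by
    constructor
    rintro x (⟨v, c, rfl, h, -⟩ | ⟨v, c, rfl, h, -⟩) <;> simp at h

namespace SimpleGraph
variable {W : Type*} {G : SimpleGraph W}

theorem IsAcyclic.isEmpty_of_forall_exists_adj_ne [Finite W] (hG : G.IsAcyclic)
    (h : ∀ v, ∃ a b, a ≠ b ∧ G.Adj v a ∧ G.Adj v b) : IsEmpty W := by
  by_contra hW
  rw [not_isEmpty_iff] at hW
  obtain ⟨u, v, p, hp, hlongest⟩ := Walk.exists_isPath_forall_isPath_length_le_length G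
  obtain ⟨w, hw, hadj⟩ : ∃ w, w ≠ p.snd ∧ G.Adj u w := by
    obtain ⟨a, b, hab, ha, hb⟩ := h u
    by_cases has : a = p.snd
    · exact ⟨b, fun hbs => hab (has.trans hbs.symm), hb⟩
    · exact ⟨a, has, ha⟩
  have hfresh : w ∉ p.support := fun hmem => hw (hG.eq_snd_of_adj_start hp hadj hmem)
  have hlonger := hlongest _ _ _ (hp.cons hfresh (h := hadj.symm))
  simp at hlonger

theorem IsAcyclic.eq_empty_of_forall_exists_adj_ne (hG : G.IsAcyclic) {S : Set W}
    (hS : S.Finite) (h : ∀ v ∈ S, ∃ a ∈ S, ∃ b ∈ S, a ≠ b ∧ G.Adj v a ∧ G.Adj v b) :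
    S = ∅ := by
  have : Finite S := hS
  have hind : IsEmpty S := (hG.induce S).isEmpty_of_forall_exists_adj_ne fun ⟨v, hv⟩ => by
    obtain ⟨a, ha, b, hb, hab, hva, hvb⟩ := h v hv
    exact ⟨⟨a, ha⟩, ⟨b, hb⟩, by simpa using hab, hva, hvb⟩
  exact Set.isEmpty_coe_sort.mp hind

end SimpleGraph

namespace CSP
variable {V C : Type*} (P : CSP V C)

@[simp]
theorem factorGraph_adj_inl_inr {v : V} {c : C} :
    P.factorGraph.Adj (.inl v) (.inr c) ↔ ∃ i, P.scope c i = v := by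
  simp [factorGraph, eq_comm]

@[simp]
theorem factorGraph_adj_inr_inl {v : V} {c : C} :
    P.factorGraph.Adj (.inr c) (.inl v) ↔ ∃ i, P.scope c i = v := by
  rw [SimpleGraph.adj_comm, factorGraph_adj_inl_inr]

theorem LockedAt.exists_ne_of_apply_ne {P : CSP V C} {c : C} (hc : P.LockedAt c)
    {x y : Fin (P.arity c) → Bool} (hx : P.pred c x) (hy : P.pred c y) {i : Fin (P.arity c)}
    (hi : x i ≠ y i) : ∃ j ≠ i, x j ≠ y j := by
  by_contra! hxy
  refine hc ⟨x, y, hx, hy, Finset.card_eq_one.mpr ⟨i, ?_⟩⟩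
  ext j
  by_cases hj : j = i <;> simp_all

def disagreement (σ τ : V → Bool) : Set (V ⊕ C) :=
  {x | Sum.elim (fun v => σ v ≠ τ v) (fun c => ∃ i, σ (P.scope c i) ≠ τ (P.scope c i)) x}

variable {P} {σ τ : V → Bool}

@[simp]
theorem inl_mem_disagreement {v : V} : .inl v ∈ P.disagreement σ τ ↔ σ v ≠ τ v := Iff.rfl

@[simp]
theorem inr_mem_disagreement {c : C} :
    .inr c ∈ P.disagreement σ τ ↔ ∃ i, σ (P.scope c i) ≠ τ (P.scope c i) := Iff.rfl

theorem disagreement_finite [Finite C] (h : ∀ v, σ v ≠ τ v → ∃ c i, P.scope c i = v) :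
    (P.disagreement σ τ).Finite := by
  refine ((Set.finite_range fun ci : Σ c, Fin (P.arity c) =>
    (.inl (P.scope ci.1 ci.2) : V ⊕ C)).union (Set.finite_range Sum.inr)).subset ?_
  rintro (v | c) hx
  · obtain ⟨c, i, rfl⟩ := h v hx
    exact .inl ⟨⟨c, i⟩, rfl⟩
  · exact .inr ⟨c, rfl⟩

theorem exists_adj_ne_of_inr_mem_disagreement (hlocked : ∀ c, P.LockedAt c)
    (hinj : ∀ c, Function.Injective (P.scope c)) (hσ : P.Satisfies σ) (hτ : P.Satisfies τ)
    {c : C} (hc : .inr c ∈ P.disagreement σ τ) :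
    ∃ a ∈ P.disagreement σ τ, ∃ b ∈ P.disagreement σ τ, a ≠ b ∧
      P.factorGraph.Adj (.inr c) a ∧ P.factorGraph.Adj (.inr c) b := by
  obtain ⟨i, hi⟩ := inr_mem_disagreement.mp hc
  obtain ⟨j, hji, hj⟩ := (hlocked c).exists_ne_of_apply_ne (hσ c) (hτ c) hi
  refine ⟨.inl (P.scope c i), hi, .inl (P.scope c j), hj, ?_, ?_, ?_⟩
  · simpa using (hinj c).ne hji.symm
  all_goals simp

theorem exists_adj_ne_of_inl_mem_disagreement {v : V} (hv : .inl v ∈ P.disagreement σ τ)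
    {c₁ c₂ : C} (hc : c₁ ≠ c₂) (h₁ : ∃ i, P.scope c₁ i = v) (h₂ : ∃ i, P.scope c₂ i = v) :
    ∃ a ∈ P.disagreement σ τ, ∃ b ∈ P.disagreement σ τ, a ≠ b ∧
      P.factorGraph.Adj (.inl v) a ∧ P.factorGraph.Adj (.inl v) b := by
  obtain ⟨i₁, rfl⟩ := h₁
  obtain ⟨i₂, hi₂⟩ := h₂
  exact ⟨.inr c₁, ⟨i₁, hv⟩, .inr c₂, ⟨i₂, hi₂ ▸ hv⟩, by simpa using hc, by simp,
    (P.factorGraph_adj_inl_inr).mpr ⟨i₂, hi₂⟩⟩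

end CSP

/-- In a locked CSP instance with injective scopes whose factor graph is
acyclic, the values on the leaves (variables of degree at most one) uniquely
determine the values of all variables: two satisfying assignments agreeing on
the leaves are equal. -/
theorem locked_tree_leaves_determine_solution
    {V C : Type*} [Fintype C] [DecidableEq V]
    (P : CSP V C)
    (hlocked : ∀ c, P.LockedAt c)
    (hinj : ∀ c, Function.Injective (P.scope c))
    (hacyclic : P.factorGraph.IsAcyclic)
    (σ τ : V → Bool) (hσ : P.Satisfies σ) (hτ : P.Satisfies τ)
    (hleaf : ∀ v : V,
      (Finset.univ.filter fun c : C => ∃ i, P.scope c i = v).card ≤ 1 → σ v = τ v) :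
    σ = τ := by
  have hshared : ∀ v, σ v ≠ τ v → ∃ c₁ c₂, c₁ ≠ c₂ ∧ (∃ i, P.scope c₁ i = v) ∧
      ∃ i, P.scope c₂ i = v := fun v hv => by
    obtain ⟨c₁, h₁, c₂, h₂, hc⟩ := Finset.one_lt_card.mp (not_le.mp (mt (hleaf v) hv))
    exact ⟨c₁, c₂, hc, (Finset.mem_filter.mp h₁).2, (Finset.mem_filter.mp h₂).2⟩
  have hfinite : (P.disagreement σ τ).Finite :=
    CSP.disagreement_finite fun v hv => by
      obtain ⟨c, -, -, hc, -⟩ := hshared v hv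
      exact ⟨c, hc⟩
  have hempty : P.disagreement σ τ = ∅ := by
    refine hacyclic.eq_empty_of_forall_exists_adj_ne hfinite ?_
    rintro (v | c) hx
    · obtain ⟨c₁, c₂, hc, h₁, h₂⟩ := hshared v hx
      exact CSP.exists_adj_ne_of_inl_mem_disagreement hx hc h₁ h₂
    · exact CSP.exists_adj_ne_of_inr_mem_disagreement hlocked hinj hσ hτ hx
  funext v
  by_contra hv
  exact (Set.eq_empty_iff_forall_notMem.mp hempty) (.inl v) hv
end

section
/- Let a CSP instance be given in which every constraint is locked and every variable has degree at least 2, and let σ : V → Bool satisfy every constraint. Then the family of delta messages ψ^{a→i}_s = (1 if s = σ(var_a i), 0 otherwise) is a fixed point of the belief propagation equations: for every constraint a, every index i in its scope, and every s ∈ Bool, ∑_{t : Fin K_a → Bool, t i = s, φ_a t} ∏_{j ≠ i} ∏_{b ∈ ∂(var_a j) \ {a}} ψ^{b→j}_{t j} equals 1 if s = σ(var_a i) and 0 otherwise (so the normalization constant Z^{a→i} equals 1 and the normalized update reproduces the delta messages). -/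
/-- `∂ v`: the set of constraints whose scope contains the variable `v`. -/
def CSP.nbhd {V C : Type*} [Fintype C] [DecidableEq V] (P : CSP V C) (v : V) :
    Finset C :=
  Finset.univ.filter fun c : C => ∃ i, P.scope c i = v

/-!
Every variable has degree at least two, so the inner product over `∂(var_a j) \ {a}` of delta
messages is not empty and collapses to the indicator `[t j = σ (var_a j)]`. The summand is
therefore the indicator that `t` agrees with `σ ∘ var_a` off `i`, and only
`t = update (σ ∘ var_a) i s` can contribute. Since `σ ∘ var_a` satisfies `a` and `a` is locked, that assignment satisfies `a`
exactly when it does not flip the `i`-th value, i.e. when `s = σ (var_a i)`.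
-/

open Finset Function

namespace CSP

variable {V C : Type*}

theorem LockedAt.pred_update_iff {P : CSP V C} {c : C} (hc : P.LockedAt c)
    {x : Fin (P.arity c) → Bool} (hx : P.pred c x) (i : Fin (P.arity c)) (b : Bool) :
    P.pred c (update x i b) ↔ b = x i := by
  refine ⟨fun hu => ?_, fun hb => by rwa [hb, update_eq_self]⟩
  by_contra hb
  have hdiff : (univ.filter fun j => update x i b j ≠ x j) = {i} := by
    ext j
    by_cases hj : j = i
    · subst hj; simpa using hb
    · simp [hj]
  exact hc ⟨_, x, hu, hx, by rw [hdiff, card_singleton]⟩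

end CSP

/-- In a locked instance in which every variable belongs to at least two
constraints, the delta messages `ψ^{b→v}_s = [s = σ v]` associated to a
satisfying assignment `σ` form a fixed point of the belief propagation
equations: the unnormalized update
`∑_{t : t i = s, φ_a t} ∏_{j ≠ i} ∏_{b ∈ ∂(var_a j) \ {a}} ψ^{b→(var_a j)}_{t j}`
equals `1` if `s = σ(var_a i)` and `0` otherwise (so `Z^{a→i} = 1` and the
normalized update reproduces the delta messages). -/
theorem delta_messages_BP_fixed_point
    {V C : Type*} [Fintype C] [DecidableEq V] [DecidableEq C]
    (P : CSP V C) [∀ c, DecidablePred (P.pred c)]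
    (hlocked : ∀ c, P.LockedAt c)
    (hdeg : ∀ v : V, 2 ≤ (P.nbhd v).card)
    (σ : V → Bool) (hσ : P.Satisfies σ)
    (ψ : C → V → Bool → ℝ)
    (hψ : ∀ (b : C) (v : V) (s : Bool), ψ b v s = if s = σ v then 1 else 0) :
    ∀ (a : C) (i : Fin (P.arity a)) (s : Bool),
      (∑ t ∈ Finset.univ.filter
          (fun t : Fin (P.arity a) → Bool => t i = s ∧ P.pred a t),
        ∏ j ∈ Finset.univ.erase i,
          ∏ b ∈ (P.nbhd (P.scope a j)).erase a,
            ψ b (P.scope a j) (t j))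
        = if s = σ (P.scope a i) then 1 else 0 := by
  intro a i s
  set τ : Fin (P.arity a) → Bool := fun j => σ (P.scope a j)
  have hinner (t : Fin (P.arity a) → Bool) (j : Fin (P.arity a)) :
      ∏ b ∈ (P.nbhd (P.scope a j)).erase a, ψ b (P.scope a j) (t j)
        = if t j = τ j then 1 else 0 := by
    simp only [hψ, prod_boole,
      (one_lt_card_iff_nontrivial.mp (hdeg _)).erase_nonempty.forall_const]
    rfl
  calc _ = ∑ t ∈ univ.filter (fun t => t i = s ∧ P.pred a t),
          ∏ j ∈ univ.erase i, if t j = τ j then (1 : ℝ) else 0 := by simp only [hinner]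
    _ = ∑ t, if t = update τ i s then (if P.pred a t then (1 : ℝ) else 0) else 0 := by
        rw [sum_filter]
        refine sum_congr rfl fun t _ => ?_
        simp only [prod_boole, eq_update_iff, mem_erase, mem_univ, and_true]
        split_ifs <;> first | rfl | tauto
    _ = if P.pred a (update τ i s) then 1 else 0 := Fintype.sum_ite_eq' _ _
    _ = _ := if_congr ((hlocked a).pred_update_iff (hσ a) i s) rfl rfl
end
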